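/- Let (d_{n,k}) = (g; f_1,…,f_ℓ) be a multiple Riordan type array with h as in the context (h^ℓ = f_1⋯f_ℓ). There exists a unique A = Σ_{j≥0} a_j t^{ℓj} ∈ K[[t]] supported on exponents divisible by ℓ such that A(t·h) = h^ℓ. For this A-sequence (a_j), one has d_{n,k} = Σ_{j≥0, jℓ≤n} a_j d_{n−jℓ, k+ℓ(j−1)} for all n ≥ 0 and all k ≥ ℓ. -/

import Mathlib

open PowerSeries Finset

/-- Formal substitution `F(u)`: for `u` with zero constant term, the `n`-th coefficient of
`F(u)` is `∑_{k ≤ n} F_k · [t^n] u^k`. -/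
noncomputable def psComp {K : Type*} [CommRing K] (F u : K⟦X⟧) : K⟦X⟧ :=
  PowerSeries.mk fun n => ∑ k ∈ Finset.range (n + 1), coeff k F * coeff n (u ^ k)

/-- Entry `d_{n,k}` of the multiple Riordan array `(g; f_0, …, f_{ℓ-1})`: the `k`-th column,
`k = qℓ + m`, has generating function `g · f_0⋯f_{m-1} · (f_0⋯f_{ℓ-1})^q`. -/
noncomputable def mrEntry {K : Type*} [CommRing K] (ℓ : ℕ) (g : K⟦X⟧) (f : ℕ → K⟦X⟧)
    (n k : ℕ) : K :=
  coeff n (g * (∏ i ∈ Finset.range (k % ℓ), f i) * (∏ i ∈ Finset.range ℓ, f i) ^ (k / ℓ))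

/-!
The `n`-th coefficient of `A(t h)` is `a_n h_0^n` plus a combination of `a_0, …, a_{n-1}`, so
`A(t h) = B` has exactly one solution, computed coefficient by coefficient; by strong induction it
is supported on multiples of `ℓ` whenever `h` and `B` are. For the recurrence, column `k ≥ ℓ` is
column `k - ℓ` times `h^ℓ = A(t h)`. Expanding `A(t h) = ∑ a_j (t h)^j` and keeping only
`j = ℓ i`, each term is column `k - ℓ + ℓ i` shifted by `t^{ℓ i}`.
-/

section Semiring

variable {R : Type*} [Semiring R]

def supportedOnMultiples (ℓ : ℕ) : Submonoid R⟦X⟧ where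
  carrier := {F | ∀ n, ¬ ℓ ∣ n → coeff n F = 0}
  one_mem' n hn := by rw [coeff_one, if_neg (by rintro rfl; exact hn (dvd_zero ℓ))]
  mul_mem' {a b} ha hb n hn := by
    rw [coeff_mul]
    refine sum_eq_zero fun p hp => ?_
    by_cases h1 : ℓ ∣ p.1
    · rw [hb p.2 fun h2 => hn (mem_antidiagonal.mp hp ▸ dvd_add h1 h2), mul_zero]
    · rw [ha p.1 h1, zero_mul]

lemma X_pow_mem_supportedOnMultiples {ℓ k : ℕ} (hk : ℓ ∣ k) :
    (X : R⟦X⟧) ^ k ∈ supportedOnMultiples ℓ := fun n hn => by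
  rw [coeff_X_pow, if_neg (by rintro rfl; exact hn hk)]

end Semiring

section CommRing

variable {R : Type*} [CommRing R]

lemma coeff_pow_eq_zero_of_lt {u : R⟦X⟧} (hu : constantCoeff u = 0) {m k : ℕ} (hmk : m < k) :
    coeff m (u ^ k) = 0 :=
  coeff_of_lt_order m
    ((ENat.natCast_lt_natCast.mpr hmk).trans_le (le_order_pow_of_constantCoeff_eq_zero k hu))

lemma trunc_psComp {u : R⟦X⟧} (hu : constantCoeff u = 0) (A : R⟦X⟧) (n : ℕ) :
    trunc (n + 1) (psComp A u) = trunc (n + 1) (∑ k ∈ range (n + 1), C (coeff k A) * u ^ k) := by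
  ext m
  rw [coeff_trunc, coeff_trunc]
  split_ifs with hm
  · simp only [psComp, coeff_mk, map_sum, coeff_C_mul]
    refine sum_subset (range_subset_range.mpr (by omega)) fun k _ hkm => ?_
    rw [coeff_pow_eq_zero_of_lt hu (by simpa using hkm), mul_zero]
  · rfl

lemma coeff_mul_psComp {u : R⟦X⟧} (hu : constantCoeff u = 0) (A P : R⟦X⟧) (n : ℕ) :
    coeff n (P * psComp A u) = ∑ k ∈ range (n + 1), coeff k A * coeff n (P * u ^ k) := by
  rw [coeff_mul_eq_coeff_trunc_mul_trunc _ _ n.lt_succ_self, trunc_psComp hu,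
    ← coeff_mul_eq_coeff_trunc_mul_trunc _ _ n.lt_succ_self, mul_sum, map_sum]
  refine sum_congr rfl fun k _ => ?_
  rw [mul_left_comm, coeff_C_mul]

lemma coeff_psComp_X_mul (A h : R⟦X⟧) (n : ℕ) :
    coeff n (psComp A (X * h)) =
      ∑ k ∈ range n, coeff k A * coeff n ((X * h) ^ k) + coeff n A * constantCoeff h ^ n := by
  rw [psComp, coeff_mk, sum_range_succ, mul_pow, coeff_X_pow_mul', if_pos le_rfl, Nat.sub_self,
    coeff_zero_eq_constantCoeff, map_pow]

end CommRing

section Field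

variable {K : Type*} [Field K]

lemma psComp_X_mul_injective {h : K⟦X⟧} (hh0 : constantCoeff h ≠ 0) :
    Function.Injective fun A : K⟦X⟧ => psComp A (X * h) := by
  intro A B hAB
  ext n
  induction n using Nat.strong_induction_on with
  | _ n ih =>
    have hn := congrArg (coeff n) hAB
    have hlow : ∑ k ∈ range n, coeff k A * coeff n ((X * h) ^ k)
        = ∑ k ∈ range n, coeff k B * coeff n ((X * h) ^ k) :=
      sum_congr rfl fun k hk => by rw [ih k (mem_range.mp hk)]
    simp only [coeff_psComp_X_mul, hlow] at hn
    exact mul_right_cancel₀ (pow_ne_zero n hh0) (add_left_cancel hn)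

noncomputable def psCompSolutionCoeff (h B : K⟦X⟧) : ℕ → K
  | n => (constantCoeff h ^ n)⁻¹ *
      (coeff n B - ∑ k ∈ (range n).attach,
        psCompSolutionCoeff h B k * coeff n ((X * h) ^ (k : ℕ)))
  decreasing_by exact mem_range.mp k.2

noncomputable def psCompSolution (h B : K⟦X⟧) : K⟦X⟧ :=
  mk (psCompSolutionCoeff h B)

lemma coeff_psCompSolution (h B : K⟦X⟧) (n : ℕ) :
    coeff n (psCompSolution h B) = (constantCoeff h ^ n)⁻¹ *
      (coeff n B - ∑ k ∈ range n, coeff k (psCompSolution h B) * coeff n ((X * h) ^ k)) := by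
  rw [psCompSolution, coeff_mk, psCompSolutionCoeff,
    ← sum_attach (range n) fun k => coeff k (mk (psCompSolutionCoeff h B)) * coeff n ((X * h) ^ k)]
  simp only [coeff_mk]

lemma psComp_psCompSolution {h : K⟦X⟧} (hh0 : constantCoeff h ≠ 0) (B : K⟦X⟧) :
    psComp (psCompSolution h B) (X * h) = B := by
  ext n
  rw [coeff_psComp_X_mul, coeff_psCompSolution h B n, mul_right_comm,
    inv_mul_cancel₀ (pow_ne_zero n hh0), one_mul, add_sub_cancel]

lemma psCompSolution_mem_supportedOnMultiples {ℓ : ℕ} {h B : K⟦X⟧}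
    (hh : h ∈ supportedOnMultiples ℓ) (hB : B ∈ supportedOnMultiples ℓ) :
    psCompSolution h B ∈ supportedOnMultiples ℓ := by
  intro n
  induction n using Nat.strong_induction_on with
  | _ n ih =>
    intro hn
    have hterm : ∀ k ∈ range n, coeff k (psCompSolution h B) * coeff n ((X * h) ^ k) = 0 := by
      intro k hk
      by_cases hℓk : ℓ ∣ k
      · rw [mul_pow]
        exact mul_eq_zero_of_right _
          (mul_mem (X_pow_mem_supportedOnMultiples hℓk) (pow_mem hh k) n hn)
      · rw [ih k (mem_range.mp hk) hℓk, zero_mul]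
    rw [coeff_psCompSolution, hB n hn, sum_eq_zero hterm, sub_zero, mul_zero]

end Field

lemma sum_range_eq_sum_filter_mul {M : Type*} [AddCommMonoid M] {ℓ : ℕ} (hℓ : 0 < ℓ)
    (F : ℕ → M) (hF : ∀ k, ¬ ℓ ∣ k → F k = 0) (N : ℕ) :
    ∑ k ∈ range (N + 1), F k = ∑ j ∈ filter (fun j => j * ℓ ≤ N) (range (N + 1)), F (ℓ * j) := by
  rw [← sum_image fun a _ b _ hab => Nat.eq_of_mul_eq_mul_left hℓ hab]
  symm
  refine sum_subset ?_ fun k hk hk' => hF k ?_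
  · intro k hk
    simp only [mem_image, mem_filter, mem_range] at hk ⊢
    obtain ⟨j, ⟨_, hj⟩, rfl⟩ := hk
    rw [mul_comm]
    omega
  · rintro ⟨j, rfl⟩
    refine hk' (mem_image.mpr ⟨j, mem_filter.mpr ⟨?_, ?_⟩, rfl⟩)
    · simp only [mem_range] at hk ⊢
      nlinarith
    · simp only [mem_range] at hk
      rw [mul_comm]
      omega

section Riordan

variable {R : Type*} [CommRing R]

noncomputable def mrColumn (ℓ : ℕ) (g : R⟦X⟧) (f : ℕ → R⟦X⟧) (k : ℕ) : R⟦X⟧ :=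
  g * (∏ i ∈ range (k % ℓ), f i) * (∏ i ∈ range ℓ, f i) ^ (k / ℓ)

lemma mrEntry_eq_coeff_mrColumn (ℓ : ℕ) (g : R⟦X⟧) (f : ℕ → R⟦X⟧) (n k : ℕ) :
    mrEntry ℓ g f n k = coeff n (mrColumn ℓ g f k) := rfl

lemma mrColumn_add_mul {ℓ : ℕ} (hℓ : 0 < ℓ) (g : R⟦X⟧) (f : ℕ → R⟦X⟧) (k j : ℕ) :
    mrColumn ℓ g f (k + ℓ * j) = mrColumn ℓ g f k * (∏ i ∈ range ℓ, f i) ^ j := by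
  rw [mrColumn, mrColumn, Nat.add_mul_mod_self_left, Nat.add_mul_div_left _ _ hℓ, pow_add,
    ← mul_assoc]

theorem mrEntry_eq_sum_coeff_mul_mrEntry {ℓ : ℕ} (hℓ : 0 < ℓ) (g : R⟦X⟧) {f : ℕ → R⟦X⟧}
    {h A : R⟦X⟧} (hhl : h ^ ℓ = ∏ i ∈ range ℓ, f i) (hA : A ∈ supportedOnMultiples ℓ)
    (hAh : psComp A (X * h) = h ^ ℓ) {n k : ℕ} (hk : ℓ ≤ k) :
    mrEntry ℓ g f n k = ∑ j ∈ filter (fun j => j * ℓ ≤ n) (range (n + 1)),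
      coeff (ℓ * j) A * mrEntry ℓ g f (n - j * ℓ) (k + ℓ * j - ℓ) := by
  obtain ⟨k, rfl⟩ : ∃ k', k = k' + ℓ * 1 := ⟨k - ℓ, by omega⟩
  have hcol : ∀ j, mrColumn ℓ g f (k + ℓ * j) = mrColumn ℓ g f k * h ^ (ℓ * j) := fun j => by
    rw [mrColumn_add_mul hℓ, ← hhl, pow_mul]
  calc mrEntry ℓ g f n (k + ℓ * 1)
      = coeff n (mrColumn ℓ g f k * psComp A (X * h)) := by
        rw [mrEntry_eq_coeff_mrColumn, hcol, hAh, mul_one]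
    _ = ∑ i ∈ range (n + 1), coeff i A * coeff n (mrColumn ℓ g f k * (X * h) ^ i) :=
        coeff_mul_psComp (by simp) A _ n
    _ = ∑ j ∈ filter (fun j => j * ℓ ≤ n) (range (n + 1)),
          coeff (ℓ * j) A * coeff n (mrColumn ℓ g f k * (X * h) ^ (ℓ * j)) :=
        sum_range_eq_sum_filter_mul hℓ _ (fun i hi => by rw [hA i hi, zero_mul]) n
    _ = _ := sum_congr rfl fun j hj => by
        have hjn : ℓ * j ≤ n := mul_comm j ℓ ▸ (mem_filter.mp hj).2
        rw [mul_pow, mul_left_comm, coeff_X_pow_mul', if_pos hjn, ← hcol, mul_one,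
          Nat.add_right_comm, Nat.add_sub_cancel, mrEntry_eq_coeff_mrColumn, mul_comm j ℓ]

end Riordan

theorem stmt12_general {K : Type*} [Field K] (ℓ : ℕ) (hℓ : 2 ≤ ℓ)
    (g : K⟦X⟧) (f : ℕ → K⟦X⟧)
    (h : K⟦X⟧) (hhs : ∀ n, ¬ (ℓ ∣ n) → coeff n h = 0) (hh0 : constantCoeff h ≠ 0)
    (hhl : h ^ ℓ = ∏ i ∈ Finset.range ℓ, f i)
    (d : ℕ → ℕ → K) (hd : ∀ n k, d n k = mrEntry ℓ g f n k) :
    (∃! A : K⟦X⟧, (∀ n, ¬ (ℓ ∣ n) → coeff n A = 0) ∧ psComp A (X * h) = h ^ ℓ) ∧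
    ∀ A : K⟦X⟧, (∀ n, ¬ (ℓ ∣ n) → coeff n A = 0) → psComp A (X * h) = h ^ ℓ →
      ∀ n k, ℓ ≤ k →
        d n k = ∑ j ∈ Finset.filter (fun j => j * ℓ ≤ n) (Finset.range (n + 1)),
          coeff (ℓ * j) A * d (n - j * ℓ) (k + ℓ * j - ℓ) := by
  have hh : h ∈ supportedOnMultiples ℓ := hhs
  have hsol := psComp_psCompSolution hh0 (h ^ ℓ)
  refine ⟨⟨psCompSolution h (h ^ ℓ),
      ⟨psCompSolution_mem_supportedOnMultiples hh (pow_mem hh ℓ), hsol⟩,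
      fun A hA => psComp_X_mul_injective hh0 (hA.2.trans hsol.symm)⟩,
    fun A hAs hAh n k hk => ?_⟩
  simp only [hd]
  exact mrEntry_eq_sum_coeff_mul_mrEntry (by omega) g hhl hAs hAh hk

/-- Existence and uniqueness of the `A`-sequence of a multiple Riordan type array, and the
recurrence it induces. -/
theorem stmt12 {K : Type*} [Field K] [CharZero K] (ℓ : ℕ) (hℓ : 2 ≤ ℓ)
    (g : K⟦X⟧) (f : ℕ → K⟦X⟧)
    (hg : ∀ n, ¬ (ℓ ∣ n) → coeff n g = 0) (hg0 : constantCoeff g ≠ 0)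
    (hf : ∀ i < ℓ, ∀ n, ¬ (ℓ ∣ n) → coeff n (f i) = 0)
    (hf0 : ∀ i < ℓ, constantCoeff (f i) ≠ 0)
    (h : K⟦X⟧) (hhs : ∀ n, ¬ (ℓ ∣ n) → coeff n h = 0) (hh0 : constantCoeff h ≠ 0)
    (hhl : h ^ ℓ = ∏ i ∈ Finset.range ℓ, f i)
    (d : ℕ → ℕ → K) (hd : ∀ n k, d n k = mrEntry ℓ g f n k) :
    (∃! A : K⟦X⟧, (∀ n, ¬ (ℓ ∣ n) → coeff n A = 0) ∧ psComp A (X * h) = h ^ ℓ) ∧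
    ∀ A : K⟦X⟧, (∀ n, ¬ (ℓ ∣ n) → coeff n A = 0) → psComp A (X * h) = h ^ ℓ →
      ∀ n k, ℓ ≤ k →
        d n k = ∑ j ∈ Finset.filter (fun j => j * ℓ ≤ n) (Finset.range (n + 1)),
          coeff (ℓ * j) A * d (n - j * ℓ) (k + ℓ * j - ℓ) :=
  stmt12_general ℓ hℓ g f h hhs hh0 hhl d hd
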